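/- (Lemma 3.1) For every n ≥ 1 and N ≥ n, the following identity holds in the ring of symmetric polynomials in x_1,…,x_N over ℚ(q): (−1)^n·e_n(x) = ∑_{b ∈ B_n} (∏_{i=1}^{ℓ(b)} 1/(q^{−r_i(b)} − 1)) · q_b(x;q^{−1}), where the sum is over all brick tabloids b of n, and q_b(x;q^{−1}) = q_{b_1}(x;q^{−1})·q_{b_2}(x;q^{−1})⋯q_{b_{ℓ(b)}}(x;q^{−1}). -/

import Mathlib

/-!
STATEMENT 3 (Lemma 3.1): For n ≥ 1, N ≥ n, in symmetric polynomials over ℚ(q):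
(−1)^n·e_n(x) = ∑_{b ∈ B_n} (∏_{i=1}^{ℓ(b)} 1/(q^{−r_i(b)} − 1)) · q_b(x;q^{−1}),
summed over all brick tabloids (= compositions) b of n.
-/

noncomputable section
open MvPolynomial

/-- The field ℚ(q) of rational functions. -/
abbrev K : Type := RatFunc ℚ

/-- z_λ = ∏_i i^{m_i(λ)} · m_i(λ)! , as a rational number. -/
def zCoeff {n : ℕ} (lam : Nat.Partition n) : ℚ :=
  (lam.parts.map fun i => (i : ℚ)).prod *
    ∏ i ∈ lam.parts.toFinset, (Nat.factorial (lam.parts.count i) : ℚ)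

/-- z_λ(t) = z_λ / ∏_j (1 − t^{λ_j}). -/
def zCoeffT {n : ℕ} (t : K) (lam : Nat.Partition n) : K :=
  ((zCoeff lam : ℚ) : K) / (lam.parts.map fun j => 1 - t ^ j).prod

/-- The power-sum product p_λ = p_{λ_1} p_{λ_2} ⋯ in N variables. -/
def pPoly (N : ℕ) {n : ℕ} (lam : Nat.Partition n) : MvPolynomial (Fin N) K :=
  (lam.parts.map fun r => psum (Fin N) K r).prod

/-- The one-row Hall–Littlewood function q_r(x;t) = ∑_{λ⊢r} p_λ / z_λ(t). -/
def qone (N : ℕ) (t : K) (r : ℕ) : MvPolynomial (Fin N) K :=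
  ∑ lam : Nat.Partition r, C (zCoeffT t lam)⁻¹ * pPoly N lam


open Finset

instance : CharZero K :=
  charZero_of_injective_algebraMap (algebraMap ℚ (RatFunc ℚ)).injective

def zcN (s : Multiset ℕ) : ℕ := s.prod * ∏ i ∈ s.toFinset, Nat.factorial (s.count i)

lemma zCoeff_eq {n : ℕ} (lam : Nat.Partition n) : zCoeff lam = (zcN lam.parts : ℚ) := by
  have h1 : (lam.parts.map fun i => (i : ℚ)) = lam.parts.map Nat.cast := by
    simp [Multiset.map_id']
  unfold zCoeff zcN
  rw [h1]
  push_cast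
  rfl

lemma zcN_pos (s : Multiset ℕ) (h0 : (0:ℕ) ∉ s) : 0 < zcN s := by
  apply Nat.mul_pos
  · apply Multiset.prod_pos
    intro i hi
    exact Nat.pos_of_ne_zero fun h => h0 (h ▸ hi)
  · apply Finset.prod_pos
    intro i _
    exact Nat.factorial_pos _

lemma sum_count_mul (s : Multiset ℕ) : ∑ r ∈ s.toFinset, r * s.count r = s.sum := by
  calc ∑ r ∈ s.toFinset, r * s.count r = ∑ r ∈ s.toFinset, s.count r • (id r) := by
        refine Finset.sum_congr rfl fun r _ => ?_
        simp [mul_comm]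
    _ = (s.map id).sum := (Finset.sum_multiset_map_count s id).symm
    _ = s.sum := by rw [Multiset.map_id]

lemma zcN_erase (s : Multiset ℕ) (r : ℕ) (h : r ∈ s) :
    zcN (s.erase r) * (r * s.count r) = zcN s := by
  classical
  set s' := s.erase r with hs'
  have hcons : r ::ₘ s' = s := Multiset.cons_erase h
  have hprod : s.prod = r * s'.prod := by rw [← hcons, Multiset.prod_cons]
  have hsub : s'.toFinset ⊆ s.toFinset := by
    intro x hx
    rw [Multiset.mem_toFinset] at hx ⊢
    exact Multiset.mem_of_mem_erase hx
  have hfac1 : ∏ i ∈ s'.toFinset, Nat.factorial (s'.count i)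
      = ∏ i ∈ s.toFinset, Nat.factorial (s'.count i) := by
    refine Finset.prod_subset hsub fun x _ hx' => ?_
    rw [Multiset.mem_toFinset] at hx'
    rw [Multiset.count_eq_zero.2 hx']
    rfl
  have hr : r ∈ s.toFinset := Multiset.mem_toFinset.2 h
  have hcount : s'.count r = s.count r - 1 := by
    rw [hs', Multiset.count_erase_self]
  have hcpos : 1 ≤ s.count r := Multiset.one_le_count_iff_mem.2 h
  have hfacs : (∏ i ∈ s.toFinset, Nat.factorial (s'.count i)) * s.count r
      = ∏ i ∈ s.toFinset, Nat.factorial (s.count i) := by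
    rw [← Finset.mul_prod_erase _ _ hr, ← Finset.mul_prod_erase _ (fun i => Nat.factorial (s.count i)) hr]
    have heq : ∀ x ∈ s.toFinset.erase r, Nat.factorial (s'.count x) = Nat.factorial (s.count x) := by
      intro x hx
      rw [hs', Multiset.count_erase_of_ne (Finset.mem_erase.1 hx).1]
    rw [Finset.prod_congr rfl heq, hcount]
    have hkey : Nat.factorial (s.count r - 1) * s.count r = Nat.factorial (s.count r) := by
      rw [mul_comm]
      exact Nat.mul_factorial_pred (by omega)
    calc (Nat.factorial (s.count r - 1) * ∏ x ∈ s.toFinset.erase r, Nat.factorial (s.count x)) * s.count r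
        = (Nat.factorial (s.count r - 1) * s.count r) * ∏ x ∈ s.toFinset.erase r, Nat.factorial (s.count x) := by ring
      _ = Nat.factorial (s.count r) * ∏ x ∈ s.toFinset.erase r, Nat.factorial (s.count x) := by rw [hkey]
  calc zcN s' * (r * s.count r)
      = (r * s'.prod) * ((∏ i ∈ s.toFinset, Nat.factorial (s'.count i)) * s.count r) := by
        rw [zcN, hfac1]; ring
    _ = zcN s := by rw [← hprod, hfacs, zcN]

-- part 2 starts here
def junkP (m : ℕ) : Nat.Partition m :=
  ⟨Multiset.replicate m 1,
   fun {i} hi => by rw [Multiset.eq_of_mem_replicate hi]; norm_num,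
   by simp [Multiset.sum_replicate]⟩

def erasePart {n : ℕ} (lam : Nat.Partition n) (r : ℕ) : Nat.Partition (n - r) :=
  if h : r ∈ lam.parts then
    { parts := lam.parts.erase r
      parts_pos := fun hi => lam.parts_pos (Multiset.mem_of_mem_erase hi)
      parts_sum := by
        have h1 : r + (lam.parts.erase r).sum = n := by
          rw [← Multiset.sum_cons, Multiset.cons_erase h, lam.parts_sum]
        omega }
  else junkP (n - r)

lemma erasePart_parts {n : ℕ} (lam : Nat.Partition n) (r : ℕ) (h : r ∈ lam.parts) :
    (erasePart lam r).parts = lam.parts.erase r := by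
  rw [erasePart, dif_pos h]

def insertPartN (n : ℕ) (p : Σ r : ℕ, Nat.Partition (n - r)) : Nat.Partition n :=
  if h : 1 ≤ p.1 ∧ p.1 ≤ n then
    { parts := p.1 ::ₘ p.2.parts
      parts_pos := fun hi => by
        rcases Multiset.mem_cons.1 hi with h' | h'
        · omega
        · exact p.2.parts_pos h'
      parts_sum := by rw [Multiset.sum_cons, p.2.parts_sum]; omega }
  else junkP n

lemma insertPartN_parts (n : ℕ) (p : Σ r : ℕ, Nat.Partition (n - r))
    (h1 : 1 ≤ p.1) (h2 : p.1 ≤ n) :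
    (insertPartN n p).parts = p.1 ::ₘ p.2.parts := by
  rw [insertPartN, dif_pos ⟨h1, h2⟩]

def wP (f : ℕ → K) {n : ℕ} (lam : Nat.Partition n) : K :=
  (lam.parts.map f).prod / ((zCoeff lam : ℚ) : K)

def Ff (N : ℕ) (f : ℕ → K) (n : ℕ) : MvPolynomial (Fin N) K :=
  ∑ lam : Nat.Partition n, C (wP f lam) * pPoly N lam

lemma parts_zero_notMem {n : ℕ} (lam : Nat.Partition n) : (0:ℕ) ∉ lam.parts :=
  fun h => absurd (lam.parts_pos h) (by omega)

lemma zC_ne {n : ℕ} (lam : Nat.Partition n) : ((zCoeff lam : ℚ) : K) ≠ 0 := by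
  rw [zCoeff_eq]
  have h := zcN_pos lam.parts (parts_zero_notMem lam)
  have h2 : (zcN lam.parts : ℚ) ≠ 0 := Nat.cast_ne_zero.2 (Nat.pos_iff_ne_zero.1 h)
  exact_mod_cast h2

lemma le_n_of_mem_parts {n : ℕ} (lam : Nat.Partition n) {r : ℕ} (h : r ∈ lam.parts) : r ≤ n := by
  have h1 : r + (lam.parts.erase r).sum = n := by
    rw [← Multiset.sum_cons, Multiset.cons_erase h, lam.parts_sum]
  omega

lemma Ff_zero (N : ℕ) (f : ℕ → K) : Ff N f 0 = 1 := by
  rw [Ff, Fintype.sum_unique]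
  have hparts : (default : Nat.Partition 0).parts = 0 := by
    have hsum := (default : Nat.Partition 0).parts_sum
    by_contra h
    obtain ⟨a, ha⟩ := Multiset.exists_mem_of_ne_zero h
    have := (default : Nat.Partition 0).parts_pos ha
    have := le_n_of_mem_parts (default : Nat.Partition 0) ha
    omega
  rw [wP, pPoly, hparts, zCoeff_eq, hparts]
  simp [zcN]

lemma Ff_rec (N : ℕ) (f : ℕ → K) (n : ℕ) (hn : 1 ≤ n) :
    (n : K) • Ff N f n = ∑ r ∈ Icc 1 n, C (f r) * psum (Fin N) K r * Ff N f (n - r) := by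
  classical
  -- the term function on the sigma type
  set T : (Σ r : ℕ, Nat.Partition (n - r)) → MvPolynomial (Fin N) K :=
    fun p => C (f p.1) * psum (Fin N) K p.1 * (C (wP f p.2) * pPoly N p.2) with hT
  have hRHS : ∑ r ∈ Icc 1 n, C (f r) * psum (Fin N) K r * Ff N f (n - r)
      = ∑ p ∈ (Icc 1 n).sigma (fun r => (univ : Finset (Nat.Partition (n - r)))), T p := by
    calc ∑ r ∈ Icc 1 n, C (f r) * psum (Fin N) K r * Ff N f (n - r)
        = ∑ r ∈ Icc 1 n, ∑ mu ∈ (univ : Finset (Nat.Partition (n - r))), T ⟨r, mu⟩ := by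
          refine Finset.sum_congr rfl fun r _ => ?_
          rw [Ff, Finset.mul_sum]
      _ = ∑ p ∈ (Icc 1 n).sigma (fun r => (univ : Finset (Nat.Partition (n - r)))), T ⟨p.1, p.2⟩ :=
          Finset.sum_sigma' _ _ _
      _ = ∑ p ∈ (Icc 1 n).sigma (fun r => (univ : Finset (Nat.Partition (n - r)))), T p :=
          Finset.sum_congr rfl fun p _ => rfl
  rw [hRHS]
  -- per-partition key computation
  have key : ∀ lam : Nat.Partition n,
      ∑ r ∈ lam.parts.toFinset, T ⟨r, erasePart lam r⟩
        = (n : K) • (C (wP f lam) * pPoly N lam) := by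
    intro lam
    have step : ∀ r ∈ lam.parts.toFinset,
        T ⟨r, erasePart lam r⟩
          = C (((r * lam.parts.count r : ℕ) : K)) * (C (wP f lam) * pPoly N lam) := by
      intro r hr
      have hmem : r ∈ lam.parts := Multiset.mem_toFinset.1 hr
      have hep := erasePart_parts lam r hmem
      have hppoly : psum (Fin N) K r * pPoly N (erasePart lam r) = pPoly N lam := by
        rw [pPoly, pPoly, hep, ← Multiset.prod_cons, ← Multiset.map_cons,
          Multiset.cons_erase hmem]
      have hprodf : f r * ((lam.parts.erase r).map f).prod = (lam.parts.map f).prod := by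
        rw [← Multiset.prod_cons, ← Multiset.map_cons, Multiset.cons_erase hmem]
      have hzrel : ((zCoeff lam : ℚ) : K)
          = ((zCoeff (erasePart lam r) : ℚ) : K) * ((r * lam.parts.count r : ℕ) : K) := by
        rw [zCoeff_eq, zCoeff_eq, hep, ← zcN_erase lam.parts r hmem]
        push_cast
        norm_cast
      have hze : ((zCoeff (erasePart lam r) : ℚ) : K) ≠ 0 := zC_ne _
      have hzl : ((zCoeff lam : ℚ) : K) ≠ 0 := zC_ne _
      have hc : ((r * lam.parts.count r : ℕ) : K) ≠ 0 := by
        have h1 : 1 ≤ r := lam.parts_pos hmem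
        have h2 : 1 ≤ lam.parts.count r := Multiset.one_le_count_iff_mem.2 hmem
        exact Nat.cast_ne_zero.2 (Nat.mul_ne_zero (by omega) (by omega))
      have hscal : f r * wP f (erasePart lam r)
          = ((r * lam.parts.count r : ℕ) : K) * wP f lam := by
        rw [wP, wP, hep, hzrel]
        calc f r * (((lam.parts.erase r).map f).prod / ((zCoeff (erasePart lam r) : ℚ):K))
              = (f r * ((lam.parts.erase r).map f).prod) / ((zCoeff (erasePart lam r) : ℚ):K) := by
                rw [mul_div_assoc]
            _ = (lam.parts.map f).prod / ((zCoeff (erasePart lam r) : ℚ):K) := by rw [hprodf]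
            _ = ((r * lam.parts.count r : ℕ) : K) *
                ((lam.parts.map f).prod / (((zCoeff (erasePart lam r) : ℚ):K) * ((r * lam.parts.count r : ℕ) : K))) := by
                rw [mul_comm (((zCoeff (erasePart lam r) : ℚ)):K) (((r * lam.parts.count r : ℕ) : K)),
                  ← mul_div_assoc, mul_div_mul_left _ _ hc]
      calc T ⟨r, erasePart lam r⟩
          = C (f r * wP f (erasePart lam r)) * (psum (Fin N) K r * pPoly N (erasePart lam r)) := by
            rw [hT]; push_cast [map_mul]; ring
        _ = C (((r * lam.parts.count r : ℕ) : K)) * C (wP f lam) * pPoly N lam := by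
            rw [hscal, hppoly, map_mul]
        _ = C (((r * lam.parts.count r : ℕ) : K)) * (C (wP f lam) * pPoly N lam) := by ring
    rw [Finset.sum_congr rfl step, ← Finset.sum_mul, ← map_sum]
    have : (∑ r ∈ lam.parts.toFinset, ((r * lam.parts.count r : ℕ) : K)) = (n : K) := by
      rw [← Nat.cast_sum, sum_count_mul, lam.parts_sum]
    rw [this, smul_eq_C_mul]
  -- reindex
  have hLHS : (n : K) • Ff N f n
      = ∑ q ∈ (univ : Finset (Nat.Partition n)).sigma (fun lam => lam.parts.toFinset),
          T ⟨q.2, erasePart q.1 q.2⟩ := by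
    calc (n : K) • Ff N f n
        = ∑ lam ∈ (univ : Finset (Nat.Partition n)), ∑ r ∈ lam.parts.toFinset,
            T ⟨r, erasePart lam r⟩ := by
          rw [Ff, Finset.smul_sum]
          exact Finset.sum_congr rfl fun lam _ => (key lam).symm
      _ = ∑ q ∈ (univ : Finset (Nat.Partition n)).sigma (fun lam => lam.parts.toFinset),
            T ⟨q.2, erasePart q.1 q.2⟩ := Finset.sum_sigma' _ _ _
  rw [hLHS]
  refine Finset.sum_nbij' (fun q => ⟨q.2, erasePart q.1 q.2⟩)
    (fun p => ⟨insertPartN n p, p.1⟩) ?_ ?_ ?_ ?_ ?_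
  · rintro ⟨lam, r⟩ hq
    rw [Finset.mem_sigma] at hq
    have hmem : r ∈ lam.parts := Multiset.mem_toFinset.1 hq.2
    rw [Finset.mem_sigma]
    exact ⟨Finset.mem_Icc.2 ⟨lam.parts_pos hmem, le_n_of_mem_parts lam hmem⟩, Finset.mem_univ _⟩
  · rintro ⟨r, mu⟩ hp
    rw [Finset.mem_sigma, Finset.mem_Icc] at hp
    rw [Finset.mem_sigma]
    refine ⟨Finset.mem_univ _, ?_⟩
    rw [Multiset.mem_toFinset, insertPartN_parts n ⟨r, mu⟩ hp.1.1 hp.1.2]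
    exact Multiset.mem_cons_self _ _
  · rintro ⟨lam, r⟩ hq
    rw [Finset.mem_sigma] at hq
    have hmem : r ∈ lam.parts := Multiset.mem_toFinset.1 hq.2
    have h1 : insertPartN n ⟨r, erasePart lam r⟩ = lam := by
      apply Nat.Partition.ext
      rw [insertPartN_parts n _ (lam.parts_pos hmem) (le_n_of_mem_parts lam hmem),
        erasePart_parts lam r hmem, Multiset.cons_erase hmem]
    exact Sigma.ext h1 (heq_of_eq rfl)
  · rintro ⟨r, mu⟩ hp
    rw [Finset.mem_sigma, Finset.mem_Icc] at hp
    have h1 : erasePart (insertPartN n ⟨r, mu⟩) r = mu := by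
      apply Nat.Partition.ext
      have hrmem : r ∈ (insertPartN n ⟨r, mu⟩).parts := by
        rw [insertPartN_parts n _ hp.1.1 hp.1.2]; exact Multiset.mem_cons_self _ _
      rw [erasePart_parts _ r hrmem, insertPartN_parts n _ hp.1.1 hp.1.2,
        Multiset.erase_cons_head]
    exact Sigma.ext rfl (heq_of_eq h1)
  · rintro ⟨lam, r⟩ _
    rfl


lemma rec_unique {N : ℕ} (a : ℕ → MvPolynomial (Fin N) K)
    (G G' : ℕ → MvPolynomial (Fin N) K) (h0 : G 0 = G' 0)
    (hG : ∀ m : ℕ, 1 ≤ m → (m : K) • G m = ∑ r ∈ Icc 1 m, a r * G (m - r))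
    (hG' : ∀ m : ℕ, 1 ≤ m → (m : K) • G' m = ∑ r ∈ Icc 1 m, a r * G' (m - r)) :
    ∀ m, G m = G' m := by
  intro m
  induction m using Nat.strong_induction_on with
  | _ m ih =>
    match m with
    | 0 => exact h0
    | (m+1) =>
      have h1 := hG (m+1) (by omega)
      have h2 := hG' (m+1) (by omega)
      have h3 : ∑ r ∈ Icc 1 (m+1), a r * G (m+1-r) = ∑ r ∈ Icc 1 (m+1), a r * G' (m+1-r) :=
        Finset.sum_congr rfl fun r hr => by
          rw [ih (m+1-r) (by rw [Finset.mem_Icc] at hr; omega)]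
      have h4 : (((m+1 : ℕ)) : K) • G (m+1) = (((m+1:ℕ)) : K) • G' (m+1) := by
        rw [h1, h2, h3]
      rw [smul_eq_C_mul, smul_eq_C_mul] at h4
      exact mul_left_cancel₀ (C_ne_zero.2 (Nat.cast_ne_zero.2 (by omega))) h4

lemma esymm_rec (N : ℕ) (m : ℕ) (hm : 1 ≤ m) :
    (m : K) • ((-1 : MvPolynomial (Fin N) K) ^ m * esymm (Fin N) K m)
      = ∑ r ∈ Icc 1 m, (C (-1 : K) * psum (Fin N) K r) *
          ((-1 : MvPolynomial (Fin N) K) ^ (m-r) * esymm (Fin N) K (m-r)) := by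
  have h := mul_esymm_eq_sum (Fin N) K m
  have hsum : ∑ a ∈ Finset.HasAntidiagonal.antidiagonal m with a.1 < m,
        (-1 : MvPolynomial (Fin N) K) ^ a.1 * esymm (Fin N) K a.1 * psum (Fin N) K a.2
      = ∑ r ∈ Icc 1 m,
        (-1 : MvPolynomial (Fin N) K) ^ (m-r) * esymm (Fin N) K (m-r) * psum (Fin N) K r := by
    refine Finset.sum_nbij' (fun a => a.2) (fun r => (m - r, r)) ?_ ?_ ?_ ?_ ?_
    · rintro ⟨x, y⟩ ha
      rw [Finset.mem_filter, Finset.HasAntidiagonal.mem_antidiagonal] at ha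
      rw [Finset.mem_Icc]
      simp only at ha ⊢
      omega
    · intro r hr
      rw [Finset.mem_Icc] at hr
      rw [Finset.mem_filter, Finset.HasAntidiagonal.mem_antidiagonal]
      simp only
      omega
    · rintro ⟨x, y⟩ ha
      rw [Finset.mem_filter, Finset.HasAntidiagonal.mem_antidiagonal] at ha
      simp only at ha ⊢
      have hxy : m - y = x := by omega
      rw [hxy]
    · intro r hr; rfl
    · rintro ⟨x, y⟩ ha
      rw [Finset.mem_filter, Finset.HasAntidiagonal.mem_antidiagonal] at ha
      simp only at ha ⊢
      have hxy : m - y = x := by omega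
      rw [hxy]
  rw [hsum] at h
  rw [smul_eq_C_mul, map_natCast]
  calc (m : MvPolynomial (Fin N) K) * ((-1) ^ m * esymm (Fin N) K m)
      = (-1 : MvPolynomial (Fin N) K) ^ m * ((m : MvPolynomial (Fin N) K) * esymm (Fin N) K m) := by
        ring
    _ = (-1 : MvPolynomial (Fin N) K) ^ m * ((-1) ^ (m + 1) *
          ∑ r ∈ Icc 1 m, (-1 : MvPolynomial (Fin N) K) ^ (m-r) * esymm (Fin N) K (m-r) * psum (Fin N) K r) := by
        rw [h]
    _ = - ∑ r ∈ Icc 1 m, (-1 : MvPolynomial (Fin N) K) ^ (m-r) * esymm (Fin N) K (m-r) * psum (Fin N) K r := by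
        rw [← mul_assoc, ← pow_add]
        have hodd : Odd (m + (m + 1)) := ⟨m, by ring⟩
        rw [hodd.neg_one_pow]
        ring
    _ = ∑ r ∈ Icc 1 m, (C (-1 : K) * psum (Fin N) K r) *
          ((-1 : MvPolynomial (Fin N) K) ^ (m-r) * esymm (Fin N) K (m-r)) := by
        rw [← Finset.sum_neg_distrib]
        refine Finset.sum_congr rfl fun r _ => ?_
        rw [map_neg, map_one]
        ring

lemma qone_eq_Ff (N : ℕ) (t : K) (r : ℕ) : qone N t r = Ff N (fun j => 1 - t ^ j) r := by
  rw [qone, Ff]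
  refine Finset.sum_congr rfl fun lam _ => ?_
  rw [zCoeffT, inv_div, wP]

lemma prod_map_pow_sum (c : K) (s : Multiset ℕ) : (s.map fun r => c ^ r).prod = c ^ s.sum := by
  induction s using Multiset.induction with
  | empty => simp
  | cons a s ih => simp [Multiset.sum_cons, pow_add, ih]

lemma Ff_scale (N : ℕ) (c : K) (f : ℕ → K) (n : ℕ) :
    Ff N (fun r => c ^ r * f r) n = C (c ^ n) * Ff N f n := by
  rw [Ff, Ff, Finset.mul_sum]
  refine Finset.sum_congr rfl fun lam _ => ?_
  rw [wP, wP]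
  have h : (lam.parts.map fun r => c ^ r * f r).prod = c ^ n * (lam.parts.map f).prod := by
    rw [Multiset.prod_map_mul, prod_map_pow_sum, lam.parts_sum]
  rw [h, mul_div_assoc, map_mul, mul_assoc]

lemma range_succ_eq_insert (n : ℕ) : range (n+1) = insert 0 (Icc 1 n) := by
  ext x
  simp only [Finset.mem_range, Finset.mem_insert, Finset.mem_Icc]
  omega

lemma sum_Icc_swap {M : Type*} [AddCommMonoid M] (n : ℕ) (F : ℕ → ℕ → M) :
    ∑ k ∈ Icc 1 n, ∑ r ∈ Icc 1 k, F k r = ∑ r ∈ Icc 1 n, ∑ k ∈ Icc r n, F k r := by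
  rw [Finset.sum_sigma', Finset.sum_sigma']
  refine Finset.sum_nbij' (fun p => ⟨p.2, p.1⟩) (fun p => ⟨p.2, p.1⟩) ?_ ?_ ?_ ?_ ?_
  · rintro ⟨k, r⟩ hp
    simp only [Finset.mem_sigma, Finset.mem_Icc] at hp ⊢
    omega
  · rintro ⟨r, k⟩ hp
    simp only [Finset.mem_sigma, Finset.mem_Icc] at hp ⊢
    omega
  · rintro ⟨k, r⟩ _; rfl
  · rintro ⟨r, k⟩ _; rfl
  · rintro ⟨k, r⟩ _; rfl

lemma sum_Icc_shift {M : Type*} [AddCommMonoid M] (r n : ℕ) (hr : r ≤ n) (F : ℕ → M) :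
    ∑ k ∈ Icc r n, F k = ∑ j ∈ range (n - r + 1), F (j + r) := by
  refine Finset.sum_nbij' (fun k => k - r) (fun j => j + r) ?_ ?_ ?_ ?_ ?_
  · intro k hk
    simp only [Finset.mem_Icc] at hk
    simp only [Finset.mem_range]
    omega
  · intro j hj
    simp only [Finset.mem_range] at hj
    simp only [Finset.mem_Icc]
    omega
  · intro k hk
    simp only [Finset.mem_Icc] at hk
    omega
  · intro j _
    omega
  · intro k hk
    simp only [Finset.mem_Icc] at hk
    congr 1
    omega

lemma sum_mul_reflect {N : ℕ} (m' : ℕ) (P Q : ℕ → MvPolynomial (Fin N) K) :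
    ∑ j ∈ range (m'+1), Q j * P (m' - j) = ∑ j ∈ range (m'+1), P j * Q (m' - j) := by
  rw [← Finset.sum_range_reflect (fun j => P j * Q (m' - j)) (m'+1)]
  refine Finset.sum_congr rfl fun j hj => ?_
  rw [Finset.mem_range] at hj
  have h1 : m' + 1 - 1 - j = m' - j := by omega
  have h2 : m' - (m' - j) = j := by omega
  rw [h1, h2, mul_comm]

lemma conv_main {N : ℕ} (m : ℕ) (P Q : ℕ → MvPolynomial (Fin N) K) (F : ℕ → K)
    (hP : ∀ k : ℕ, 1 ≤ k → (k : K) • P k = ∑ r ∈ Icc 1 k, C (F r) * psum (Fin N) K r * P (k - r)) :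
    ∑ k ∈ range (m+1), ((k : K) • P k) * Q (m-k)
      = ∑ r ∈ Icc 1 m, (C (F r) * psum (Fin N) K r) *
          ∑ j ∈ range (m - r + 1), P j * Q (m - r - j) := by
  rw [range_succ_eq_insert, Finset.sum_insert (by simp)]
  rw [Nat.cast_zero, zero_smul, zero_mul, zero_add]
  calc ∑ k ∈ Icc 1 m, ((k : K) • P k) * Q (m-k)
      = ∑ k ∈ Icc 1 m, ∑ r ∈ Icc 1 k, (C (F r) * psum (Fin N) K r * P (k - r)) * Q (m-k) := by
        refine Finset.sum_congr rfl fun k hk => ?_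
        rw [Finset.mem_Icc] at hk
        rw [hP k hk.1, Finset.sum_mul]
    _ = ∑ r ∈ Icc 1 m, ∑ k ∈ Icc r m, (C (F r) * psum (Fin N) K r * P (k - r)) * Q (m-k) :=
        sum_Icc_swap m _
    _ = ∑ r ∈ Icc 1 m, (C (F r) * psum (Fin N) K r) *
          ∑ j ∈ range (m - r + 1), P j * Q (m - r - j) := by
        refine Finset.sum_congr rfl fun r hr => ?_
        rw [Finset.mem_Icc] at hr
        rw [Finset.mul_sum]
        rw [sum_Icc_shift r m hr.2 (fun k => (C (F r) * psum (Fin N) K r * P (k - r)) * Q (m-k))]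
        refine Finset.sum_congr rfl fun j hj => ?_
        rw [Finset.mem_range] at hj
        have h1 : j + r - r = j := by omega
        have h2 : m - (j + r) = m - r - j := by omega
        rw [h1, h2, mul_assoc]

lemma conv_aux (N : ℕ) (f g : ℕ → K) :
    ∀ m, (∑ k ∈ range (m+1), Ff N f k * Ff N g (m - k)) = Ff N (fun r => f r + g r) m := by
  refine rec_unique (fun r => C (f r + g r) * psum (Fin N) K r) _ _ ?_ ?_ ?_
  · simp [Ff_zero]
  · intro m hm
    have stage1 : (m : K) • ∑ k ∈ range (m+1), Ff N f k * Ff N g (m - k)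
        = (∑ k ∈ range (m+1), ((k : K) • Ff N f k) * Ff N g (m-k))
          + ∑ k ∈ range (m+1), Ff N f k * (((m-k : ℕ) : K) • Ff N g (m-k)) := by
      rw [Finset.smul_sum, ← Finset.sum_add_distrib]
      refine Finset.sum_congr rfl fun k hk => ?_
      rw [Finset.mem_range] at hk
      have hmk : (m : K) = (k : K) + ((m - k : ℕ) : K) := by
        rw [← Nat.cast_add]
        congr 1
        omega
      rw [hmk, add_smul, smul_mul_assoc, mul_smul_comm]
    have stage2 : ∑ k ∈ range (m+1), Ff N f k * (((m-k : ℕ) : K) • Ff N g (m-k))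
        = ∑ k ∈ range (m+1), ((k : K) • Ff N g k) * Ff N f (m-k) := by
      rw [← Finset.sum_range_reflect (fun k => Ff N f k * (((m-k : ℕ) : K) • Ff N g (m-k))) (m+1)]
      refine Finset.sum_congr rfl fun j hj => ?_
      rw [Finset.mem_range] at hj
      have h1 : m + 1 - 1 - j = m - j := by omega
      have h2 : m - (m - j) = j := by omega
      rw [h1, h2, mul_comm]
    rw [stage1, stage2]
    rw [conv_main m (Ff N f) (Ff N g) f (fun k hk => Ff_rec N f k hk),
      conv_main m (Ff N g) (Ff N f) g (fun k hk => Ff_rec N g k hk)]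
    rw [← Finset.sum_add_distrib]
    refine Finset.sum_congr rfl fun r hr => ?_
    rw [sum_mul_reflect (m - r) (Ff N f) (Ff N g)]
    rw [map_add]
    ring
  · intro m hm
    exact Ff_rec N _ m hm

-- ### part 4
lemma neg_one_esymm (N : ℕ) :
    ∀ m, Ff N (fun _ => (-1 : K)) m = (-1 : MvPolynomial (Fin N) K) ^ m * esymm (Fin N) K m := by
  refine rec_unique (fun r => C (-1 : K) * psum (Fin N) K r) _ _ ?_ ?_ ?_
  · rw [Ff_zero]
    simp [esymm_zero]
  · intro m hm
    exact Ff_rec N _ m hm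
  · exact esymm_rec N

lemma conv_q (N : ℕ) (t : K) (n : ℕ) :
    ∑ k ∈ range (n+1), qone N t k *
        ((-1 : MvPolynomial (Fin N) K) ^ (n-k) * esymm (Fin N) K (n-k))
      = C (t ^ n) * ((-1 : MvPolynomial (Fin N) K) ^ n * esymm (Fin N) K n) := by
  calc ∑ k ∈ range (n+1), qone N t k *
        ((-1 : MvPolynomial (Fin N) K) ^ (n-k) * esymm (Fin N) K (n-k))
      = ∑ k ∈ range (n+1), Ff N (fun j => 1 - t ^ j) k * Ff N (fun _ => (-1 : K)) (n - k) := by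
        refine Finset.sum_congr rfl fun k _ => ?_
        rw [qone_eq_Ff, neg_one_esymm]
    _ = Ff N (fun r => (1 - t ^ r) + (-1 : K)) n := conv_aux N _ _ n
    _ = Ff N (fun r => t ^ r * (-1 : K)) n := by
        congr 1
        funext r
        ring
    _ = C (t ^ n) * Ff N (fun _ => (-1 : K)) n := Ff_scale N t _ n
    _ = C (t ^ n) * ((-1 : MvPolynomial (Fin N) K) ^ n * esymm (Fin N) K n) := by
        rw [neg_one_esymm]

lemma e_step (N : ℕ) (t : K) (n : ℕ) (hn : 1 ≤ n) (ht : t ^ n ≠ 1) :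
    (-1 : MvPolynomial (Fin N) K) ^ n * esymm (Fin N) K n
      = C ((t ^ n - 1)⁻¹) *
          ∑ k ∈ Icc 1 n, qone N t k *
            ((-1 : MvPolynomial (Fin N) K) ^ (n-k) * esymm (Fin N) K (n-k)) := by
  have h := conv_q N t n
  rw [range_succ_eq_insert, Finset.sum_insert (by simp)] at h
  have hq0 : qone N t 0 = 1 := by rw [qone_eq_Ff, Ff_zero]
  rw [hq0, one_mul, Nat.sub_zero] at h
  have h2 : ∑ k ∈ Icc 1 n, qone N t k *
        ((-1 : MvPolynomial (Fin N) K) ^ (n-k) * esymm (Fin N) K (n-k))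
      = C (t ^ n - 1) * ((-1 : MvPolynomial (Fin N) K) ^ n * esymm (Fin N) K n) := by
    rw [map_sub, map_one, sub_mul, one_mul, ← h]
    ring
  rw [h2, ← mul_assoc, ← map_mul, inv_mul_cancel₀ (sub_ne_zero.2 ht), map_one, one_mul]

lemma Xinv_pow_ne_one (n : ℕ) (hn : 1 ≤ n) : ((RatFunc.X : K)⁻¹) ^ n ≠ 1 := by
  have hX : (RatFunc.X : K) ^ n ≠ 1 := by
    intro h
    have h1 : (Polynomial.X : Polynomial ℚ) ^ n = 1 := by
      apply IsFractionRing.injective (Polynomial ℚ) (RatFunc ℚ)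
      rw [map_pow, map_one, RatFunc.algebraMap_X, h]
    have h0 := congrArg (fun p => Polynomial.coeff p 0) h1
    simp only [Polynomial.coeff_X_pow, Polynomial.coeff_one] at h0
    have : ¬ (0 = n) := by omega
    simp [this] at h0
  rw [inv_pow]
  intro h
  exact hX (by rw [← inv_inv ((RatFunc.X : K) ^ n), h, inv_one])

lemma sigma_comp_ext {m₁ m₂ : ℕ} (c₁ : Composition m₁) (c₂ : Composition m₂)
    (h : c₁.blocks = c₂.blocks) :
    (⟨m₁, c₁⟩ : Σ r : ℕ, Composition r) = ⟨m₂, c₂⟩ := by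
  have hm : m₁ = m₂ := by rw [← c₁.blocks_sum, ← c₂.blocks_sum, h]
  subst hm
  exact congrArg _ (Composition.ext h)

lemma blocks_ne_nil {m : ℕ} (hm : 1 ≤ m) (b : Composition m) : b.blocks ≠ [] := by
  intro h
  have := b.blocks_sum
  rw [h] at this
  simp at this
  omega

def jComp (m : ℕ) (p : Σ r : ℕ, Composition r) : Composition m :=
  if h : p.1 < m then
    { blocks := p.2.blocks ++ [m - p.1]
      blocks_pos := by
        intro i hi
        rcases List.mem_append.1 hi with h' | h'
        · exact p.2.blocks_pos h'
        · simp only [List.mem_singleton] at h'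
          omega
      blocks_sum := by
        rw [List.sum_append, p.2.blocks_sum]
        simp
        omega }
  else Composition.ones m

lemma jComp_blocks (m : ℕ) (p : Σ r : ℕ, Composition r) (h : p.1 < m) :
    (jComp m p).blocks = p.2.blocks ++ [m - p.1] := by
  rw [jComp, dif_pos h]

def iComp (m : ℕ) (b : Composition m) : Σ r : ℕ, Composition r :=
  ⟨b.blocks.dropLast.sum,
   { blocks := b.blocks.dropLast
     blocks_pos := fun hi => b.blocks_pos (List.dropLast_sublist _ |>.subset hi)
     blocks_sum := rfl }⟩

lemma dropLast_sum_lt {m : ℕ} (hm : 1 ≤ m) (b : Composition m) :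
    b.blocks.dropLast.sum < m ∧
      m - b.blocks.dropLast.sum = b.blocks.getLast (blocks_ne_nil hm b) := by
  have hne := blocks_ne_nil hm b
  have hsplit : b.blocks.dropLast ++ [b.blocks.getLast hne] = b.blocks :=
    List.dropLast_append_getLast hne
  have hsum : b.blocks.dropLast.sum + b.blocks.getLast hne = m := by
    have := congrArg List.sum hsplit
    rw [List.sum_append] at this
    simp only [List.sum_cons, List.sum_nil, add_zero] at this
    rw [this, b.blocks_sum]
  have hpos : 0 < b.blocks.getLast hne := b.blocks_pos (List.getLast_mem hne)
  constructor <;> omega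

def Wc (N : ℕ) {m : ℕ} (b : Composition m) : MvPolynomial (Fin N) K :=
  (∏ i ∈ Finset.range b.length,
      C (((RatFunc.X : K)⁻¹ ^ b.sizeUpTo (i + 1) - 1)⁻¹)) *
    (b.blocks.map (qone N (RatFunc.X : K)⁻¹)).prod

lemma main_claim (N : ℕ) : ∀ m : ℕ,
    (-1 : MvPolynomial (Fin N) K) ^ m * esymm (Fin N) K m = ∑ b : Composition m, Wc N b := by
  intro m
  induction m using Nat.strong_induction_on with
  | _ m ih =>
    rcases Nat.eq_zero_or_pos m with rfl | hm
    · have hb : ∀ b : Composition 0, Wc N b = 1 := by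
        intro b
        have hbl : b.blocks = [] := by
          cases hb : b.blocks with
          | nil => rfl
          | cons a l =>
            have hpos := b.blocks_pos (hb ▸ (List.mem_cons_self : a ∈ a :: l))
            have hsum := b.blocks_sum
            rw [hb, List.sum_cons] at hsum
            omega
        have hlen : b.length = 0 := by
          show b.blocks.length = 0
          rw [hbl]
          rfl
        rw [Wc, hlen, hbl]
        simp
      have hsum0 : ∑ b : Composition 0, Wc N b = ∑ _b : Composition 0, (1 : MvPolynomial (Fin N) K) :=
        Finset.sum_congr rfl fun b _ => hb b
      rw [hsum0, Finset.sum_const, card_univ, composition_card]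
      simp [esymm_zero]
    · set t := (RatFunc.X : K)⁻¹ with hts
      have key : ∀ p : Σ r : ℕ, Composition r, p.1 < m →
          Wc N (jComp m p) = (C ((t ^ m - 1)⁻¹) * qone N t (m - p.1)) * Wc N p.2 := by
        rintro ⟨r, c⟩ h
        have hbl := jComp_blocks m ⟨r, c⟩ h
        have hlen : (jComp m ⟨r, c⟩).length = c.blocks.length + 1 := by
          show (jComp m ⟨r, c⟩).blocks.length = _
          rw [hbl, List.length_append]
          rfl
        have hprod : ((jComp m ⟨r, c⟩).blocks.map (qone N t)).prod
            = (c.blocks.map (qone N t)).prod * qone N t (m - r) := by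
          rw [hbl, List.map_append, List.prod_append]
          simp
        have hcoef : (∏ i ∈ Finset.range ((jComp m ⟨r, c⟩).length),
              C ((t ^ (jComp m ⟨r, c⟩).sizeUpTo (i + 1) - 1)⁻¹) : MvPolynomial (Fin N) K)
            = (∏ i ∈ Finset.range c.length, C ((t ^ c.sizeUpTo (i + 1) - 1)⁻¹)) *
                C ((t ^ m - 1)⁻¹) := by
          rw [hlen, Finset.prod_range_succ]
          congr 1
          · refine Finset.prod_congr rfl fun i hi => ?_
            rw [Finset.mem_range] at hi
            have hlb : c.length = c.blocks.length := rfl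
            have hs : (jComp m ⟨r, c⟩).sizeUpTo (i + 1) = c.sizeUpTo (i + 1) := by
              show (((jComp m ⟨r, c⟩).blocks.take (i+1)).sum) = ((c.blocks.take (i+1)).sum)
              rw [hbl, List.take_append_of_le_length (by omega : i + 1 ≤ c.blocks.length)]
            rw [hs]
          · have h2 := Composition.sizeUpTo_length (jComp m ⟨r, c⟩)
            rw [hlen] at h2
            rw [h2]
        rw [Wc, Wc, hcoef, hprod]
        ring
      have hRm : ∑ b : Composition m, Wc N b
          = ∑ p ∈ (range m).sigma (fun r => (univ : Finset (Composition r))),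
              (C ((t ^ m - 1)⁻¹) * qone N t (m - p.1)) * Wc N p.2 := by
        refine Finset.sum_nbij' (iComp m) (jComp m) ?_ ?_ ?_ ?_ ?_
        · intro b _
          rw [Finset.mem_sigma]
          exact ⟨Finset.mem_range.2 (dropLast_sum_lt hm b).1, Finset.mem_univ _⟩
        · intro p _
          exact Finset.mem_univ _
        · intro b _
          apply Composition.ext
          rw [jComp_blocks m (iComp m b) (dropLast_sum_lt hm b).1]
          show b.blocks.dropLast ++ [m - b.blocks.dropLast.sum] = b.blocks
          rw [(dropLast_sum_lt hm b).2]
          exact List.dropLast_append_getLast (blocks_ne_nil hm b)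
        · rintro ⟨r, c⟩ hp
          rw [Finset.mem_sigma, Finset.mem_range] at hp
          refine sigma_comp_ext _ c ?_
          show (jComp m ⟨r, c⟩).blocks.dropLast = c.blocks
          rw [jComp_blocks m ⟨r, c⟩ hp.1]
          exact List.dropLast_concat
        · intro b _
          have hlt : (iComp m b).1 < m := (dropLast_sum_lt hm b).1
          have hkey := key (iComp m b) hlt
          have hji : jComp m (iComp m b) = b := by
            apply Composition.ext
            rw [jComp_blocks m (iComp m b) hlt]
            show b.blocks.dropLast ++ [m - b.blocks.dropLast.sum] = b.blocks
            rw [(dropLast_sum_lt hm b).2]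
            exact List.dropLast_append_getLast (blocks_ne_nil hm b)
          rw [hji] at hkey
          exact hkey
      calc (-1 : MvPolynomial (Fin N) K) ^ m * esymm (Fin N) K m
          = C ((t ^ m - 1)⁻¹) * ∑ k ∈ Icc 1 m, qone N t k *
              ((-1 : MvPolynomial (Fin N) K) ^ (m-k) * esymm (Fin N) K (m-k)) :=
            e_step N t m hm (Xinv_pow_ne_one m hm)
        _ = ∑ k ∈ Icc 1 m, (C ((t ^ m - 1)⁻¹) * qone N t k) *
              ((-1 : MvPolynomial (Fin N) K) ^ (m-k) * esymm (Fin N) K (m-k)) := by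
            rw [Finset.mul_sum]
            exact Finset.sum_congr rfl fun k _ => by ring
        _ = ∑ r ∈ range m, (C ((t ^ m - 1)⁻¹) * qone N t (m - r)) *
              ((-1 : MvPolynomial (Fin N) K) ^ r * esymm (Fin N) K r) := by
            refine Finset.sum_nbij' (fun k => m - k) (fun r => m - r) ?_ ?_ ?_ ?_ ?_
            · intro k hk
              rw [Finset.mem_Icc] at hk
              rw [Finset.mem_range]
              show m - k < m
              omega
            · intro r hr
              rw [Finset.mem_range] at hr
              rw [Finset.mem_Icc]
              show 1 ≤ m - r ∧ m - r ≤ m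
              omega
            · intro k hk
              rw [Finset.mem_Icc] at hk
              show m - (m - k) = k
              omega
            · intro r hr
              rw [Finset.mem_range] at hr
              show m - (m - r) = r
              omega
            · intro k hk
              rw [Finset.mem_Icc] at hk
              have h1 : m - (m - k) = k := by omega
              show _ = (C ((t ^ m - 1)⁻¹) * qone N t (m - (m - k))) *
                ((-1 : MvPolynomial (Fin N) K) ^ (m - k) * esymm (Fin N) K (m - k))
              rw [h1]
        _ = ∑ r ∈ range m, (C ((t ^ m - 1)⁻¹) * qone N t (m - r)) *
              ∑ b : Composition r, Wc N b := by
            refine Finset.sum_congr rfl fun r hr => ?_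
            rw [Finset.mem_range] at hr
            rw [ih r hr]
        _ = ∑ r ∈ range m, ∑ b ∈ (univ : Finset (Composition r)),
              (C ((t ^ m - 1)⁻¹) * qone N t (m - r)) * Wc N b := by
            refine Finset.sum_congr rfl fun r _ => ?_
            rw [Finset.mul_sum]
        _ = ∑ p ∈ (range m).sigma (fun r => (univ : Finset (Composition r))),
              (C ((t ^ m - 1)⁻¹) * qone N t (m - p.1)) * Wc N p.2 :=
            Finset.sum_sigma' _ _ _
        _ = ∑ b : Composition m, Wc N b := hRm.symm


theorem esymm_brick_tabloid_expansion (n N : ℕ) (hn : 1 ≤ n) (hN : n ≤ N) :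
    (-1 : MvPolynomial (Fin N) K) ^ n * esymm (Fin N) K n
      = ∑ b : Composition n,
          (∏ i ∈ Finset.range b.length,
              C (((RatFunc.X : K)⁻¹ ^ b.sizeUpTo (i + 1) - 1)⁻¹)) *
            (b.blocks.map (qone N (RatFunc.X : K)⁻¹)).prod :=
  (main_claim N n).trans (Finset.sum_congr rfl fun b _ => rfl)

end
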